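/- Let S be a finite set and let y = (y_T) be a family of nonnegative real numbers indexed by the nonempty subsets T ⊆ S. Then the Minkowski sum Σ_{∅ ≠ T ⊆ S} y_T · Δ_T of dilated faces of the standard simplex equals the set {x ∈ ℝ^S : Σ_{s ∈ S} x_s = z_S and Σ_{r ∈ R} x_r ≥ z_R for all nonempty R ⊆ S}, where z_R = Σ_{∅ ≠ T ⊆ R} y_T. -/

import Mathlib

open Pointwise

/-- The face `Δ_T = conv{e_t : t ∈ T}` of the standard simplex in `ℝ^α`. -/
noncomputable def simplexFace {α : Type*} [DecidableEq α] (T : Finset α) :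
    Set (α → ℝ) :=
  convexHull ℝ {x : α → ℝ | ∃ t ∈ T, x = Pi.single t 1}

/-!
The inclusion `⊆` follows by summing coordinates. For `⊇`, generalize to an arbitrary finite
family `𝒮` of nonempty sets, with `z_𝒮(R) = Σ_{T ∈ 𝒮, T ⊆ R} y_T`, and add the sets of `𝒮` one at a
time. If `x` satisfies the constraints for `𝒮 ∪ {T₀}`, then `F(R) = x(R) - z_𝒮(R)` is submodular
(`z_𝒮` is supermodular since `y ≥ 0`), nonnegative, vanishes at `∅` and is at least `y_{T₀}` on
supersets of `T₀`. The greedy algorithm, run on the monotone function `A ↦ min_{R ⊇ A} F(R)` and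
rescaled, yields `p ∈ y_{T₀} Δ_{T₀}` with `p(R) ≤ F(R)` for all `R`, which says exactly that `x - p`
satisfies the constraints for `𝒮`.
-/

open Finset

section SimplexFace

variable {α : Type*} [DecidableEq α] {T : Finset α}

omit [DecidableEq α] in
theorem convex_setOf_nonneg_support_subset_sum_eq (T : Finset α) (c : ℝ) :
    Convex ℝ {x : α → ℝ | (∀ s, 0 ≤ x s) ∧ (∀ s ∉ T, x s = 0) ∧ ∑ t ∈ T, x t = c} := by
  rintro u ⟨hu0, huT, husum⟩ v ⟨hv0, hvT, hvsum⟩ a b ha hb hab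
  refine ⟨fun s => ?_, fun s hs => ?_, ?_⟩
  · simp only [Pi.add_apply, Pi.smul_apply, smul_eq_mul]
    exact add_nonneg (mul_nonneg ha (hu0 s)) (mul_nonneg hb (hv0 s))
  · simp [huT s hs, hvT s hs]
  · simp only [Pi.add_apply, Pi.smul_apply, smul_eq_mul, sum_add_distrib, ← mul_sum, husum,
      hvsum, ← add_mul, hab, one_mul]

theorem mem_simplexFace {x : α → ℝ} :
    x ∈ simplexFace T ↔ (∀ s, 0 ≤ x s) ∧ (∀ s ∉ T, x s = 0) ∧ ∑ t ∈ T, x t = 1 := by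
  constructor
  · refine fun hx => convexHull_min ?_ (convex_setOf_nonneg_support_subset_sum_eq T 1) hx
    rintro _ ⟨t, ht, rfl⟩
    refine ⟨fun s => ?_, fun s hs => Pi.single_eq_of_ne (ne_of_mem_of_not_mem ht hs).symm _, ?_⟩
    · rw [Pi.single_apply]; split_ifs <;> norm_num
    · rw [sum_pi_single' t 1 T, if_pos ht]
  · rintro ⟨hx0, hxT, hxsum⟩
    have hx : x = ∑ t ∈ T, x t • (Pi.single t 1 : α → ℝ) := by
      ext s
      by_cases hs : s ∈ T <;> simp [Finset.sum_apply, Pi.single_apply, hs, hxT]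
    rw [hx, ← centerMass_eq_of_sum_1 T _ hxsum]
    exact centerMass_mem_convexHull T (fun t _ => hx0 t) (by rw [hxsum]; exact one_pos)
      fun t ht => ⟨t, ht, rfl⟩

theorem mem_smul_simplexFace (hT : T.Nonempty) {c : ℝ} (hc : 0 ≤ c) {p : α → ℝ} :
    p ∈ c • simplexFace T ↔ (∀ s, 0 ≤ p s) ∧ (∀ s ∉ T, p s = 0) ∧ ∑ t ∈ T, p t = c := by
  rcases hc.eq_or_lt with rfl | hc
  · obtain ⟨t, ht⟩ := hT
    have hne : (simplexFace T).Nonempty := ⟨Pi.single t 1, subset_convexHull ℝ _ ⟨t, ht, rfl⟩⟩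
    rw [Set.zero_smul_set hne, Set.mem_zero]
    constructor
    · rintro rfl
      simp
    · rintro ⟨hp0, hpT, hpsum⟩
      ext s
      by_cases hs : s ∈ T
      · exact (sum_eq_zero_iff_of_nonneg fun s _ => hp0 s).1 hpsum s hs
      · exact hpT s hs
  · rw [Set.mem_smul_set_iff_inv_smul_mem₀ hc.ne', mem_simplexFace]
    simp only [Pi.smul_apply, smul_eq_mul, ← mul_sum, inv_mul_eq_one₀ hc.ne', eq_comm (a := c),
      mul_nonneg_iff_of_pos_left (inv_pos.2 hc), mul_eq_zero, inv_eq_zero, hc.ne, false_or]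

end SimplexFace

section SetFunction

variable {α : Type*} [DecidableEq α]

def IsSubmodular (F : Finset α → ℝ) : Prop :=
  ∀ A B, F (A ∪ B) + F (A ∩ B) ≤ F A + F B

theorem sum_eq_sum_inter_of_eq_zero {p : α → ℝ} {T : Finset α} (hp : ∀ s ∉ T, p s = 0)
    (A : Finset α) : ∑ a ∈ A, p a = ∑ a ∈ A ∩ T, p a :=
  (sum_subset inter_subset_left fun s hsA hs => hp s fun hsT => hs (mem_inter.2 ⟨hsA, hsT⟩)).symm

/-- The greedy algorithm: adding the elements of `T` one by one, each gets its marginal value. -/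
theorem exists_greedy_of_monotone_of_isSubmodular {h : Finset α → ℝ} (hmono : Monotone h)
    (hsub : IsSubmodular h) (h₀ : h ∅ = 0) (T : Finset α) :
    ∃ p : α → ℝ, (∀ s, 0 ≤ p s) ∧ (∀ s ∉ T, p s = 0) ∧ ∑ t ∈ T, p t = h T ∧
      ∀ A, ∑ a ∈ A, p a ≤ h A := by
  induction T using Finset.induction_on with
  | empty =>
    exact ⟨0, fun _ => le_rfl, fun _ _ => rfl, by simp [h₀],
      fun A => by simpa [h₀] using hmono (empty_subset A)⟩
  | @insert t T htT ih =>
    obtain ⟨p, hp0, hpT, hpsum, hpA⟩ := ih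
    set d := h (insert t T) - h T
    have hd : 0 ≤ d := sub_nonneg.2 (hmono (subset_insert t T))
    have hsum : ∀ A, ∑ a ∈ A, (p + Pi.single t d : α → ℝ) a
        = ∑ a ∈ A ∩ T, p a + if t ∈ A then d else 0 := fun A => by
      rw [← sum_eq_sum_inter_of_eq_zero hpT, ← sum_pi_single' t d A, ← sum_add_distrib]
      rfl
    refine ⟨p + Pi.single t d, fun s => add_nonneg (hp0 s) ?_, fun s hs => ?_, ?_, fun A => ?_⟩
    · rw [Pi.single_apply]; split_ifs <;> simp [hd]
    · have hst : s ≠ t := fun h => hs (h ▸ mem_insert_self t T)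
      simp [hpT s fun h => hs (mem_insert_of_mem h), hst]
    · rw [hsum, if_pos (mem_insert_self t T), insert_inter_of_notMem htT, inter_self, hpsum]
      ring
    · rw [hsum]
      have hAT := hpA (A ∩ T)
      split_ifs with htA
      · have h₁ := hsub A T
        have h₂ : h (insert t T) ≤ h (A ∪ T) :=
          hmono (insert_subset (mem_union_left T htA) subset_union_right)
        linarith
      · linarith [hmono (inter_subset_left : A ∩ T ⊆ A)]

variable [Fintype α]

/-- The largest monotone minorant of `F`. -/
def infOverSupersets (F : Finset α → ℝ) (A : Finset α) : ℝ :=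
  ({R | A ⊆ R} : Finset (Finset α)).inf' ⟨univ, by simp⟩ F

variable {F : Finset α → ℝ} {A R : Finset α}

theorem infOverSupersets_le (hAR : A ⊆ R) : infOverSupersets F A ≤ F R :=
  inf'_le F (by simpa using hAR)

theorem le_infOverSupersets {c : ℝ} (h : ∀ R, A ⊆ R → c ≤ F R) : c ≤ infOverSupersets F A :=
  le_inf' _ _ fun R hR => h R (by simpa using hR)

theorem exists_infOverSupersets_eq (F : Finset α → ℝ) (A : Finset α) :
    ∃ R, A ⊆ R ∧ infOverSupersets F A = F R := by
  obtain ⟨R, hR, hFR⟩ :=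
    exists_mem_eq_inf' (⟨univ, by simp⟩ : ({R | A ⊆ R} : Finset _).Nonempty) F
  exact ⟨R, by simpa using hR, hFR⟩

theorem monotone_infOverSupersets (F : Finset α → ℝ) : Monotone (infOverSupersets F) :=
  fun _ _ hAB => le_infOverSupersets fun _ hBR => infOverSupersets_le (hAB.trans hBR)

theorem IsSubmodular.infOverSupersets (hF : IsSubmodular F) :
    IsSubmodular (infOverSupersets F) := by
  intro A B
  obtain ⟨RA, hARA, hA⟩ := exists_infOverSupersets_eq F A
  obtain ⟨RB, hBRB, hB⟩ := exists_infOverSupersets_eq F B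
  have hunion := infOverSupersets_le (F := F) (union_subset_union hARA hBRB)
  have hinter := infOverSupersets_le (F := F) (inter_subset_inter hARA hBRB)
  linarith [hF RA RB]

theorem infOverSupersets_empty (hF_nonneg : ∀ R, 0 ≤ F R) (hF_empty : F ∅ = 0) :
    infOverSupersets F ∅ = 0 :=
  le_antisymm (hF_empty ▸ infOverSupersets_le subset_rfl)
    (le_infOverSupersets fun R _ => hF_nonneg R)

/-- Greedy on `infOverSupersets F`, rescaled by `c / infOverSupersets F T ≤ 1`. -/
theorem exists_polymatroid_point_of_isSubmodular (hF : IsSubmodular F)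
    (hF_nonneg : ∀ R, 0 ≤ F R) (hF_empty : F ∅ = 0) {T : Finset α} {c : ℝ} (hc : 0 ≤ c)
    (hcF : ∀ R, T ⊆ R → c ≤ F R) :
    ∃ p : α → ℝ, (∀ s, 0 ≤ p s) ∧ (∀ s ∉ T, p s = 0) ∧ ∑ t ∈ T, p t = c ∧
      ∀ R, ∑ r ∈ R, p r ≤ F R := by
  obtain ⟨q, hq0, hqT, hqsum, hqF⟩ := exists_greedy_of_monotone_of_isSubmodular
    (monotone_infOverSupersets F) hF.infOverSupersets (infOverSupersets_empty hF_nonneg hF_empty) T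
  have hcT : c ≤ infOverSupersets F T := le_infOverSupersets hcF
  set μ := c / infOverSupersets F T
  have hμ1 : μ ≤ 1 := div_le_one_of_le₀ hcT (hc.trans hcT)
  refine ⟨μ • q, fun s => mul_nonneg (div_nonneg hc (hc.trans hcT)) (hq0 s),
    fun s hs => by simp [hqT s hs], ?_, fun R => ?_⟩
  · simp only [Pi.smul_apply, smul_eq_mul, ← mul_sum, hqsum]
    exact div_mul_cancel_of_imp fun h => le_antisymm (h ▸ hcT) hc
  · calc ∑ r ∈ R, (μ • q) r = μ * ∑ r ∈ R, q r := by simp [mul_sum]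
      _ ≤ ∑ r ∈ R, q r := mul_le_of_le_one_left (sum_nonneg fun s _ => hq0 s) hμ1
      _ ≤ infOverSupersets F R := hqF R
      _ ≤ F R := infOverSupersets_le subset_rfl

end SetFunction

section MinkowskiSum

variable {α : Type*} [DecidableEq α]

def lowerSum (𝒮 : Finset (Finset α)) (y : Finset α → ℝ) (R : Finset α) : ℝ :=
  ∑ T ∈ 𝒮 with T ⊆ R, y T

variable {𝒮 : Finset (Finset α)} {y : Finset α → ℝ}

theorem lowerSum_insert {T₀ : Finset α} (hT₀ : T₀ ∉ 𝒮) (R : Finset α) :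
    lowerSum (insert T₀ 𝒮) y R = (if T₀ ⊆ R then y T₀ else 0) + lowerSum 𝒮 y R := by
  simp only [lowerSum, sum_filter, sum_insert hT₀]

theorem lowerSum_empty (h𝒮 : ∀ T ∈ 𝒮, T.Nonempty) : lowerSum 𝒮 y ∅ = 0 :=
  sum_eq_zero fun T hT => by
    obtain ⟨hT𝒮, hTsub⟩ := mem_filter.1 hT
    exact absurd (subset_empty.1 hTsub) (h𝒮 T hT𝒮).ne_empty

theorem lowerSum_add_lowerSum_le (hy : ∀ T ∈ 𝒮, 0 ≤ y T) (P Q : Finset α) :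
    lowerSum 𝒮 y P + lowerSum 𝒮 y Q ≤ lowerSum 𝒮 y (P ∪ Q) + lowerSum 𝒮 y (P ∩ Q) := by
  simp only [lowerSum, sum_filter, ← sum_add_distrib]
  refine sum_le_sum fun T hT => ?_
  have := hy T hT
  have hPQ : T ⊆ P ∨ T ⊆ Q → T ⊆ P ∪ Q := by
    rintro (h | h)
    exacts [h.trans subset_union_left, h.trans subset_union_right]
  by_cases hP : T ⊆ P <;> by_cases hQ : T ⊆ Q <;> split_ifs <;> simp_all [subset_inter_iff]

theorem isSubmodular_sum_sub_lowerSum (hy : ∀ T ∈ 𝒮, 0 ≤ y T) (x : α → ℝ) :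
    IsSubmodular fun R => ∑ r ∈ R, x r - lowerSum 𝒮 y R := fun P Q => by
  linarith [lowerSum_add_lowerSum_le hy P Q, sum_union_inter (s₁ := P) (s₂ := Q) (f := x)]

variable [Fintype α]

def deformedPermutahedron (𝒮 : Finset (Finset α)) (y : Finset α → ℝ) : Set (α → ℝ) :=
  {x | ∑ s, x s = ∑ T ∈ 𝒮, y T ∧ ∀ R, lowerSum 𝒮 y R ≤ ∑ r ∈ R, x r}

theorem sum_smul_simplexFace_subset (hy : ∀ T ∈ 𝒮, 0 ≤ y T) (h𝒮 : ∀ T ∈ 𝒮, T.Nonempty) :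
    ∑ T ∈ 𝒮, y T • simplexFace T ⊆ deformedPermutahedron 𝒮 y := by
  intro x hx
  obtain ⟨g, hg, rfl⟩ := (Set.mem_finsetSum _ _ _).1 hx
  have hgT : ∀ T ∈ 𝒮, ∀ R, T ⊆ R → ∑ r ∈ R, g T r = y T := fun T hT R hTR => by
    obtain ⟨-, hgT, hgsum⟩ := (mem_smul_simplexFace (h𝒮 T hT) (hy T hT)).1 (hg hT)
    rw [← hgsum]
    exact (sum_subset hTR fun s _ hs => hgT s hs).symm
  have hg0 : ∀ T ∈ 𝒮, ∀ s, 0 ≤ g T s := fun T hT =>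
    ((mem_smul_simplexFace (h𝒮 T hT) (hy T hT)).1 (hg hT)).1
  refine ⟨?_, fun R => ?_⟩
  · simp only [Finset.sum_apply]
    rw [sum_comm]
    exact sum_congr rfl fun T hT => hgT T hT univ (subset_univ T)
  · simp only [Finset.sum_apply]
    rw [sum_comm]
    calc lowerSum 𝒮 y R = ∑ T ∈ 𝒮 with T ⊆ R, ∑ r ∈ R, g T r :=
          sum_congr rfl fun T hT => (hgT T (mem_filter.1 hT).1 R (mem_filter.1 hT).2).symm
      _ ≤ ∑ T ∈ 𝒮, ∑ r ∈ R, g T r :=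
          sum_le_sum_of_subset_of_nonneg (filter_subset _ _)
            fun T hT _ => sum_nonneg fun r _ => hg0 T hT r

theorem exists_mem_smul_simplexFace_sub_mem {T₀ : Finset α} (hT₀ : T₀ ∉ 𝒮)
    (hT₀ne : T₀.Nonempty) (hy₀ : 0 ≤ y T₀) (hy : ∀ T ∈ 𝒮, 0 ≤ y T)
    (h𝒮 : ∀ T ∈ 𝒮, T.Nonempty) {x : α → ℝ} (hx : x ∈ deformedPermutahedron (insert T₀ 𝒮) y) :
    ∃ p ∈ y T₀ • simplexFace T₀, x - p ∈ deformedPermutahedron 𝒮 y := by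
  obtain ⟨hxsum, hxR⟩ := hx
  have hFR : ∀ R, (if T₀ ⊆ R then y T₀ else 0) ≤ ∑ r ∈ R, x r - lowerSum 𝒮 y R := fun R => by
    have := hxR R
    rw [lowerSum_insert hT₀] at this
    linarith
  obtain ⟨p, hp0, hpT, hpsum, hpF⟩ := exists_polymatroid_point_of_isSubmodular
    (isSubmodular_sum_sub_lowerSum hy x)
    (fun R => (hFR R).trans' (by split_ifs <;> simp [hy₀]))
    (by simp [lowerSum_empty h𝒮]) hy₀ fun R hT₀R => (if_pos hT₀R).symm.trans_le (hFR R)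
  refine ⟨p, (mem_smul_simplexFace hT₀ne hy₀).2 ⟨hp0, hpT, hpsum⟩, ?_, fun R => ?_⟩
  · have hpuniv : ∑ s, p s = y T₀ := by
      rw [← hpsum]
      exact (sum_subset (subset_univ T₀) fun s _ hs => hpT s hs).symm
    simp only [Pi.sub_apply, sum_sub_distrib, hxsum, sum_insert hT₀, hpuniv, add_sub_cancel_left]
  · have := hpF R
    simp only [Pi.sub_apply, sum_sub_distrib] at this ⊢
    linarith

theorem deformedPermutahedron_subset (hy : ∀ T ∈ 𝒮, 0 ≤ y T) (h𝒮 : ∀ T ∈ 𝒮, T.Nonempty) :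
    deformedPermutahedron 𝒮 y ⊆ ∑ T ∈ 𝒮, y T • simplexFace T := by
  induction 𝒮 using Finset.induction_on with
  | empty =>
    rintro x ⟨hxsum, hxR⟩
    have hx0 : ∀ s, 0 ≤ x s := fun s => by simpa [lowerSum] using hxR {s}
    rw [sum_empty, Set.mem_zero]
    ext s
    simpa using (sum_eq_zero_iff_of_nonneg fun s _ => hx0 s).1 hxsum s (mem_univ s)
  | @insert T₀ 𝒮 hT₀ ih =>
    intro x hx
    obtain ⟨p, hp, hxp⟩ := exists_mem_smul_simplexFace_sub_mem hT₀
      (h𝒮 T₀ (mem_insert_self T₀ 𝒮)) (hy T₀ (mem_insert_self T₀ 𝒮))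
      (fun T hT => hy T (mem_insert_of_mem hT)) (fun T hT => h𝒮 T (mem_insert_of_mem hT)) hx
    rw [sum_insert hT₀, ← add_sub_cancel p x]
    exact Set.add_mem_add hp (ih (fun T hT => hy T (mem_insert_of_mem hT))
      (fun T hT => h𝒮 T (mem_insert_of_mem hT)) hxp)

theorem sum_smul_simplexFace_eq (hy : ∀ T ∈ 𝒮, 0 ≤ y T) (h𝒮 : ∀ T ∈ 𝒮, T.Nonempty) :
    ∑ T ∈ 𝒮, y T • simplexFace T = deformedPermutahedron 𝒮 y :=
  (sum_smul_simplexFace_subset hy h𝒮).antisymm (deformedPermutahedron_subset hy h𝒮)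

end MinkowskiSum

theorem lowerSum_nonempty_subsets {α : Type*} [Fintype α] [DecidableEq α] (y : Finset α → ℝ)
    (R : Finset α) :
    lowerSum (univ.powerset.filter Finset.Nonempty) y R
      = ∑ T ∈ R.powerset.filter Finset.Nonempty, y T := by
  unfold lowerSum
  congr 1
  ext T
  simp [and_comm]

/-- For nonnegative dilation factors `y = (y_T)` indexed by the nonempty
subsets `T` of a finite set `α`, the Minkowski sum `Σ_{∅ ≠ T ⊆ α} y_T Δ_T` of
dilated faces of the standard simplex equals the deformed permutahedron
`{x : Σ_s x_s = z_α and Σ_{r ∈ R} x_r ≥ z_R for all nonempty R ⊆ α}`, where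
`z_R = Σ_{∅ ≠ T ⊆ R} y_T`. -/
theorem minkowski_sum_eq_deformed_permutahedron
    (α : Type*) [Fintype α] [DecidableEq α]
    (y : Finset α → ℝ) (hy : ∀ T : Finset α, T.Nonempty → 0 ≤ y T) :
    (∑ T ∈ Finset.univ.powerset.filter Finset.Nonempty, y T • simplexFace T)
      = {x : α → ℝ |
          (∑ s : α, x s)
            = (∑ T ∈ Finset.univ.powerset.filter Finset.Nonempty, y T) ∧
          ∀ R : Finset α, R.Nonempty →
            (∑ T ∈ R.powerset.filter Finset.Nonempty, y T) ≤ ∑ r ∈ R, x r} := by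
  have hnonempty :
      ∀ T ∈ (univ.powerset.filter Finset.Nonempty : Finset (Finset α)), T.Nonempty :=
    fun T hT => (mem_filter.1 hT).2
  rw [sum_smul_simplexFace_eq (fun T hT => hy T (hnonempty T hT)) hnonempty]
  ext x
  simp only [deformedPermutahedron, lowerSum_nonempty_subsets]
  refine and_congr_right fun _ => ⟨fun h R _ => h R, fun h R => ?_⟩
  rcases R.eq_empty_or_nonempty with rfl | hR
  · simp [filter_singleton]
  · exact h R hR
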